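/- arXiv:1501.05469 — 4 statements merged into one kernel-verified Lean document; each statement's English description precedes it below -/
import Mathlib

section
/- With g as the Riccati update g(X) = A X Aᵀ + Q − A X Cᵀ (C X Cᵀ + R)^{-1} C X Aᵀ (R ≻ 0, Q ⪰ 0), g is monotone on positive semidefinite matrices: if 0 ⪯ X ⪯ Y then g(X) ⪯ g(Y). -/
open Matrix

/-- The Riccati update g is monotone with respect to the Loewner order:
if 0 ⪯ X ⪯ Y then g(X) ⪯ g(Y). -/
theorem riccati_monotone {n m : ℕ}
    (A Q X Y : Matrix (Fin n) (Fin n) ℝ) (C : Matrix (Fin m) (Fin n) ℝ)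
    (R : Matrix (Fin m) (Fin m) ℝ)
    (hQ : Q.PosSemidef) (hR : R.PosDef) (hX : X.PosSemidef) (hXY : (Y - X).PosSemidef) :
    ((A * Y * Aᵀ + Q - A * Y * Cᵀ * (C * Y * Cᵀ + R)⁻¹ * (C * Y * Aᵀ)) -
     (A * X * Aᵀ + Q - A * X * Cᵀ * (C * X * Cᵀ + R)⁻¹ * (C * X * Aᵀ))).PosSemidef := by
  have hY : Y.PosSemidef := by simpa using hX.add hXY
  have hXs : Xᵀ = X := by
    rw [← conjTranspose_eq_transpose_of_trivial]; exact hX.isHermitian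
  have hYs : Yᵀ = Y := by
    rw [← conjTranspose_eq_transpose_of_trivial]; exact hY.isHermitian
  set Sx := C * X * Cᵀ + R with hSxdef
  set Sy := C * Y * Cᵀ + R with hSydef
  have hCT : Cᴴ = Cᵀ := conjTranspose_eq_transpose_of_trivial C
  have hSx : Sx.PosDef := by
    have := Matrix.PosDef.posSemidef_add (hX.mul_mul_conjTranspose_same C) hR
    rwa [hCT] at this
  have hSy : Sy.PosDef := by
    have := Matrix.PosDef.posSemidef_add (hY.mul_mul_conjTranspose_same C) hR
    rwa [hCT] at this
  have hSxu : IsUnit Sx.det := isUnit_iff_ne_zero.mpr hSx.det_pos.ne'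
  have hSyu : IsUnit Sy.det := isUnit_iff_ne_zero.mpr hSy.det_pos.ne'
  have hSxs : Sxᵀ = Sx := by
    rw [← conjTranspose_eq_transpose_of_trivial]; exact hSx.isHermitian
  have hSys : Syᵀ = Sy := by
    rw [← conjTranspose_eq_transpose_of_trivial]; exact hSy.isHermitian
  have hTxt : (Sx⁻¹)ᵀ = Sx⁻¹ := by rw [transpose_nonsing_inv, hSxs]
  have hTyt : (Sy⁻¹)ᵀ = Sy⁻¹ := by rw [transpose_nonsing_inv, hSys]
  have cx : ∀ {p : ℕ} (M : Matrix (Fin m) (Fin p) ℝ), Sx⁻¹ * (Sx * M) = M := by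
    intro p M; rw [← Matrix.mul_assoc, nonsing_inv_mul _ hSxu, Matrix.one_mul]
  have cx' : ∀ {p : ℕ} (M : Matrix (Fin m) (Fin p) ℝ), Sx * (Sx⁻¹ * M) = M := by
    intro p M; rw [← Matrix.mul_assoc, mul_nonsing_inv _ hSxu, Matrix.one_mul]
  have cy : ∀ {p : ℕ} (M : Matrix (Fin m) (Fin p) ℝ), Sy⁻¹ * (Sy * M) = M := by
    intro p M; rw [← Matrix.mul_assoc, nonsing_inv_mul _ hSyu, Matrix.one_mul]
  have cy' : ∀ {p : ℕ} (M : Matrix (Fin m) (Fin p) ℝ), Sy * (Sy⁻¹ * M) = M := by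
    intro p M; rw [← Matrix.mul_assoc, mul_nonsing_inv _ hSyu, Matrix.one_mul]
  have hCXC : ∀ {p : ℕ} (M : Matrix (Fin m) (Fin p) ℝ),
      C * (X * (Cᵀ * M)) = Sx * M - R * M := by
    intro p M
    rw [hSxdef, Matrix.add_mul, Matrix.mul_assoc, Matrix.mul_assoc, add_sub_cancel_right]
  have hCYC : ∀ {p : ℕ} (M : Matrix (Fin m) (Fin p) ℝ),
      C * (Y * (Cᵀ * M)) = Sy * M - R * M := by
    intro p M
    rw [hSydef, Matrix.add_mul, Matrix.mul_assoc, Matrix.mul_assoc, add_sub_cancel_right]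
  set K := A * Y * Cᵀ * Sy⁻¹ with hK
  set D := K - A * X * Cᵀ * Sx⁻¹ with hD
  set E := A - K * C with hE
  have key : ((A * Y * Aᵀ + Q - A * Y * Cᵀ * Sy⁻¹ * (C * Y * Aᵀ)) -
      (A * X * Aᵀ + Q - A * X * Cᵀ * Sx⁻¹ * (C * X * Aᵀ))) =
      D * Sx * Dᵀ + E * (Y - X) * Eᵀ := by
    simp only [hD, hE, hK, transpose_mul, transpose_sub, transpose_transpose,
      hXs, hYs, hTxt, hTyt, Matrix.mul_sub, Matrix.sub_mul, Matrix.mul_add,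
      Matrix.add_mul, Matrix.mul_assoc, hCXC, hCYC, cx, cx', cy, cy']
    abel
  rw [key]
  have h1 : (D * Sx * Dᵀ).PosSemidef := by
    have := hSx.posSemidef.mul_mul_conjTranspose_same D
    rwa [conjTranspose_eq_transpose_of_trivial] at this
  have h2 : (E * (Y - X) * Eᵀ).PosSemidef := by
    have := hXY.mul_mul_conjTranspose_same E
    rwa [conjTranspose_eq_transpose_of_trivial] at this
  exact h1.add h2
end

section
/- Let X_1,…,X_s ≻ 0 and suppose there exists μ ∈ (0,1) with X_j − ∑_i π_{ij} A_j M X_i M* A_j* − ∑_i q_{ij} A_j N X_i N* A_j* ⪰ (1−μ) X_j for all j, where all coefficients π_{ij}, q_{ij} ≥ 0 and A_j, M, N are fixed matrices. Then for any H₀ = (H_{0,1},…,H_{0,s}) with H_{0,i} ⪰ 0, the iterates of the linear operator 𝓛_j(H) = ∑_i π_{ij} A_j M H_i M* A_j* + ∑_i q_{ij} A_j N H_i N* A_j* converge to zero. -/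
open Matrix Filter
open scoped Topology Matrix.Norms.L2Operator ComplexOrder

/-- The linear operator 𝓛_j(H) = ∑ᵢ π_{ij} A_j M H_i M* A_j* + ∑ᵢ q_{ij} A_j N H_i N* A_j*
acting on s-tuples of matrices. -/
noncomputable def kfOp {n s : ℕ} (π q : Fin s → Fin s → ℝ)
    (A : Fin s → Matrix (Fin n) (Fin n) ℂ) (M N : Matrix (Fin n) (Fin n) ℂ)
    (H : Fin s → Matrix (Fin n) (Fin n) ℂ) : Fin s → Matrix (Fin n) (Fin n) ℂ :=
  fun j => ∑ i, (π i j : ℂ) • (A j * M * H i * Mᴴ * (A j)ᴴ)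
    + ∑ i, (q i j : ℂ) • (A j * N * H i * Nᴴ * (A j)ᴴ)

open scoped MatrixOrder

/-! The operator 𝓛 is an `ℝ`-linear, order-preserving map on the C⋆-algebra of `s`-tuples of
matrices. As `X` is strictly positive, `H₀ ≤ c • X` for some `c ≥ 0`, and iterating `𝓛 X ≤ μ • X`
gives `0 ≤ 𝓛ᵏ H₀ ≤ (c μᵏ) • X`. The C⋆-norm is monotone on positive elements, so
`‖𝓛ᵏ H₀‖ ≤ c μᵏ ‖X‖ → 0`. -/

section
variable {𝕜 E : Type*} [Semiring 𝕜] [PartialOrder 𝕜] [IsOrderedRing 𝕜]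
  [AddCommMonoid E] [PartialOrder E] [Module 𝕜 E] [PosSMulMono 𝕜 E]

theorem LinearMap.iterate_le_smul_pow_of_le_smul (L : E →ₗ[𝕜] E) (hL : Monotone L) {x h : E}
    {c μ : 𝕜} (hc : 0 ≤ c) (hμ : 0 ≤ μ) (hLx : L x ≤ μ • x) (hh : h ≤ c • x) (k : ℕ) :
    L^[k] h ≤ (c * μ ^ k) • x := by
  induction k with
  | zero => simpa using hh
  | succ k ih =>
    calc L^[k + 1] h = L (L^[k] h) := Function.iterate_succ_apply' ..
      _ ≤ L ((c * μ ^ k) • x) := hL ih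
      _ = (c * μ ^ k) • L x := map_smul ..
      _ ≤ (c * μ ^ k) • μ • x := smul_le_smul_of_nonneg_left hLx (by positivity)
      _ = (c * μ ^ (k + 1)) • x := by rw [smul_smul, pow_succ, mul_assoc]
end

section
variable {A : Type*} [CStarAlgebra A] [PartialOrder A] [StarOrderedRing A]

theorem IsSelfAdjoint.exists_le_smul_of_isStrictlyPositive {a x : A} (ha : IsSelfAdjoint a)
    (hx : IsStrictlyPositive x) : ∃ c : ℝ, 0 ≤ c ∧ a ≤ c • x := by
  cases subsingleton_or_nontrivial A
  · exact ⟨0, le_rfl, (Subsingleton.elim _ _).le⟩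
  obtain ⟨r, hr, hrx⟩ := (CFC.exists_pos_algebraMap_le_iff hx.isSelfAdjoint).2
    fun _ ↦ hx.spectrum_pos
  refine ⟨‖a‖ / r, by positivity, ?_⟩
  calc a ≤ algebraMap ℝ A ‖a‖ := ha.le_algebraMap_norm_self
    _ = (‖a‖ / r) • algebraMap ℝ A r := by
      rw [Algebra.smul_def, ← map_mul, div_mul_cancel₀ _ hr.ne']
    _ ≤ (‖a‖ / r) • x := smul_le_smul_of_nonneg_left hrx (by positivity)

theorem LinearMap.tendsto_iterate_nhds_zero_of_le_smul (L : A →ₗ[ℝ] A) (hL : Monotone L)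
    {x : A} (hx : IsStrictlyPositive x) {μ : ℝ} (hμ0 : 0 ≤ μ) (hμ1 : μ < 1)
    (hLx : L x ≤ μ • x) {h : A} (hh : 0 ≤ h) : Tendsto (fun k ↦ L^[k] h) atTop (𝓝 0) := by
  obtain ⟨c, hc, hhx⟩ := hh.isSelfAdjoint.exists_le_smul_of_isStrictlyPositive hx
  have hnonneg (k : ℕ) : 0 ≤ L^[k] h := by
    simpa [iterate_map_zero] using hL.iterate k hh
  have hbound (k : ℕ) : ‖L^[k] h‖ ≤ c * ‖x‖ * μ ^ k :=
    calc ‖L^[k] h‖ ≤ ‖(c * μ ^ k) • x‖ := CStarAlgebra.norm_le_norm_of_nonneg_of_le (hnonneg k)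
          (L.iterate_le_smul_pow_of_le_smul hL hc hμ0 hLx hhx k)
      _ = c * ‖x‖ * μ ^ k := by
          rw [norm_smul, Real.norm_of_nonneg (by positivity)]; ring
  refine squeeze_zero_norm hbound ?_
  simpa using (tendsto_pow_atTop_nhds_zero_of_lt_one hμ0 hμ1).const_mul (c * ‖x‖)
end

section
variable {n s : ℕ} (π q : Fin s → Fin s → ℝ) (A : Fin s → Matrix (Fin n) (Fin n) ℂ)
  (M N : Matrix (Fin n) (Fin n) ℂ)

noncomputable def kfLinearMap :
    (Fin s → Matrix (Fin n) (Fin n) ℂ) →ₗ[ℝ] (Fin s → Matrix (Fin n) (Fin n) ℂ) where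
  toFun := kfOp π q A M N
  map_add' H G := by
    ext1 j
    simp only [kfOp, Pi.add_apply, Matrix.mul_add, Matrix.add_mul, smul_add,
      Finset.sum_add_distrib]
    abel
  map_smul' r H := by
    ext1 j
    simp only [kfOp, Pi.smul_apply, Matrix.mul_smul, Matrix.smul_mul, smul_comm _ r,
      ← Finset.smul_sum, smul_add, RingHom.id_apply]

theorem coe_kfLinearMap : ⇑(kfLinearMap π q A M N) = kfOp π q A M N := rfl

variable {π q A M N}

theorem kfOp_nonneg (hπ : ∀ i j, 0 ≤ π i j) (hq : ∀ i j, 0 ≤ q i j)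
    {H : Fin s → Matrix (Fin n) (Fin n) ℂ} (hH : 0 ≤ H) : 0 ≤ kfOp π q A M N H := by
  have hterm (r : ℝ) (hr : 0 ≤ r) (B : Matrix (Fin n) (Fin n) ℂ) (i j : Fin s) :
      0 ≤ (r : ℂ) • (A j * B * H i * Bᴴ * (A j)ᴴ) := by
    have hconj : A j * B * H i * Bᴴ * (A j)ᴴ = A j * B * H i * (A j * B)ᴴ := by
      simp only [conjTranspose_mul, Matrix.mul_assoc]
    rw [Complex.coe_smul, hconj]
    exact smul_nonneg hr (star_right_conjugate_nonneg (hH i) _)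
  intro j
  exact add_nonneg (Finset.sum_nonneg fun i _ ↦ hterm _ (hπ i j) M i j)
    (Finset.sum_nonneg fun i _ ↦ hterm _ (hq i j) N i j)

theorem monotone_kfLinearMap (hπ : ∀ i j, 0 ≤ π i j) (hq : ∀ i j, 0 ≤ q i j) :
    Monotone (kfLinearMap π q A M N) := by
  intro H G hHG
  rw [← sub_nonneg, ← map_sub]
  exact kfOp_nonneg hπ hq (sub_nonneg.2 hHG)
end

/-- If there exist X_j ≻ 0 and μ ∈ (0,1) with X_j − 𝓛_j(X) ⪰ (1−μ)X_j for all j,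
then the iterates of 𝓛 applied to any PSD tuple H₀ converge to zero. -/
theorem kfOp_iterates_tendsto_zero {n s : ℕ}
    (π q : Fin s → Fin s → ℝ) (hπ : ∀ i j, 0 ≤ π i j) (hq : ∀ i j, 0 ≤ q i j)
    (A : Fin s → Matrix (Fin n) (Fin n) ℂ) (M N : Matrix (Fin n) (Fin n) ℂ)
    (X : Fin s → Matrix (Fin n) (Fin n) ℂ) (hX : ∀ j, (X j).PosDef)
    (μ : ℝ) (hμ0 : 0 < μ) (hμ1 : μ < 1)
    (hcontr : ∀ j, ((X j - kfOp π q A M N X j) - ((1 - μ : ℝ) : ℂ) • X j).PosSemidef)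
    (H₀ : Fin s → Matrix (Fin n) (Fin n) ℂ) (hH₀ : ∀ i, (H₀ i).PosSemidef) :
    Tendsto (fun k : ℕ => (kfOp π q A M N)^[k] H₀) atTop (𝓝 0) := by
  have hXpos : IsStrictlyPositive X := IsStrictlyPositive.iff_of_unital.2
    ⟨fun j ↦ (hX j).posSemidef.nonneg, Pi.isUnit_iff.2 fun j ↦ (hX j).isUnit⟩
  have hLX : kfLinearMap π q A M N X ≤ μ • X := by
    intro j
    have hdiff : (μ • X) j - kfLinearMap π q A M N X j
        = X j - kfOp π q A M N X j - ((1 - μ : ℝ) : ℂ) • X j := by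
      rw [Complex.coe_smul, sub_smul, one_smul, coe_kfLinearMap, Pi.smul_apply]
      abel
    exact Matrix.le_iff.2 (hdiff ▸ hcontr j)
  exact (kfLinearMap π q A M N).tendsto_iterate_nhds_zero_of_le_smul
    (monotone_kfLinearMap hπ hq) hXpos hμ0.le hμ1 hLX fun i ↦ (hH₀ i).nonneg
end

section
/- For any X ⪰ 0, the Riccati update with one-step observable pair satisfies a uniform bound: if C ∈ ℝ^{n×n} is invertible (so (A,C) is one-step observable) and R ≻ 0, Q ⪰ 0, then there exists a constant L > 0 independent of X such that g(X) ⪯ L·I for all positive semidefinite X, where g(X) = A X Aᵀ + Q − A X Cᵀ (C X Cᵀ + R)^{-1} C X Aᵀ. -/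
/-!
Write `A = M C` with `M = A C⁻¹` and put `S = C X Cᵀ`. The update becomes
`g(X) = M (S - S (S + R)⁻¹ S) Mᵀ + Q`, and `S - S (S + R)⁻¹ S = R - R (S + R)⁻¹ R`, so
`g(X) = M R Mᵀ + Q - (M R) (S + R)⁻¹ (M R)ᵀ ⪯ M R Mᵀ + Q`, a bound that no longer depends on `X`.
It remains to dominate this fixed symmetric matrix by a multiple of the identity.
-/

open Matrix

open scoped MatrixOrder

theorem Matrix.IsHermitian.exists_le_smul_one {ι 𝕜 : Type*} [Fintype ι] [DecidableEq ι]
    [RCLike 𝕜] {B : Matrix ι ι 𝕜} (hB : B.IsHermitian) : ∃ L : ℝ, 0 < L ∧ B ≤ L • 1 := by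
  obtain ⟨r, hr⟩ := (ContinuousFunctionalCalculus.isCompact_spectrum (R := ℝ) B).bddAbove
  refine ⟨max r 1, by positivity, ?_⟩
  rw [← Algebra.algebraMap_eq_smul_one]
  exact le_algebraMap_of_spectrum_le (fun x hx => (hr hx).trans (le_max_left r 1)) hB

theorem Matrix.sub_mul_inv_add_mul_self_comm {ι α : Type*} [Fintype ι] [DecidableEq ι]
    [CommRing α] {S R : Matrix ι ι α} (h : IsUnit (S + R)) :
    S - S * (S + R)⁻¹ * S = R - R * (S + R)⁻¹ * R := by
  have hdet := (isUnit_iff_isUnit_det _).mp h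
  set T := S + R with hT
  calc S - S * T⁻¹ * S = S * T⁻¹ * (T - S) := by
        rw [mul_sub, nonsing_inv_mul_cancel_right _ _ hdet]
    _ = (T - R) * T⁻¹ * R := by rw [hT]; simp only [add_sub_cancel_left, add_sub_cancel_right]
    _ = R - R * T⁻¹ * R := by
        rw [sub_mul, sub_mul, mul_nonsing_inv _ hdet, one_mul]

section Riccati

variable {ι : Type*} [Fintype ι] [DecidableEq ι]

noncomputable def riccatiMap (A C Q R X : Matrix ι ι ℝ) : Matrix ι ι ℝ :=
  A * X * Aᵀ + Q - A * X * Cᵀ * (C * X * Cᵀ + R)⁻¹ * (C * X * Aᵀ)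

theorem riccatiMap_mul_right (M C Q R X : Matrix ι ι ℝ) :
    riccatiMap (M * C) C Q R X =
      M * (C * X * Cᵀ - C * X * Cᵀ * (C * X * Cᵀ + R)⁻¹ * (C * X * Cᵀ)) * Mᵀ + Q := by
  simp only [riccatiMap, transpose_mul, Matrix.mul_assoc]
  noncomm_ring

theorem riccatiMap_le_of_isUnit {A C Q R X : Matrix ι ι ℝ} (hC : IsUnit C) (hR : R.PosDef)
    (hX : X.PosSemidef) :
    riccatiMap A C Q R X ≤ (A * C⁻¹) * R * (A * C⁻¹)ᵀ + Q := by
  have hCdet := (isUnit_iff_isUnit_det C).mp hC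
  obtain ⟨M, rfl⟩ : ∃ M, A = M * C := ⟨A * C⁻¹, (nonsing_inv_mul_cancel_right _ _ hCdet).symm⟩
  have hS : (C * X * Cᵀ).PosSemidef := by
    simpa only [conjTranspose_eq_transpose_of_trivial] using hX.mul_mul_conjTranspose_same C
  have hT : (C * X * Cᵀ + R).PosDef := hR.posSemidef_add hS
  have hgain : (M * R * (C * X * Cᵀ + R)⁻¹ * R * Mᵀ).PosSemidef := by
    have := hT.inv.posSemidef.mul_mul_conjTranspose_same (M * R)
    have hRt : Rᵀ = R := by
      simpa only [conjTranspose_eq_transpose_of_trivial] using hR.isHermitian.eq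
    rwa [conjTranspose_eq_transpose_of_trivial, transpose_mul, hRt, ← Matrix.mul_assoc] at this
  rw [riccatiMap_mul_right, sub_mul_inv_add_mul_self_comm hT.isUnit,
    mul_nonsing_inv_cancel_right _ _ hCdet]
  calc M * (R - R * (C * X * Cᵀ + R)⁻¹ * R) * Mᵀ + Q
      = M * R * Mᵀ + Q - M * R * (C * X * Cᵀ + R)⁻¹ * R * Mᵀ := by noncomm_ring
    _ ≤ M * R * Mᵀ + Q := sub_le_self _ hgain.nonneg

end Riccati

/-- If C is invertible (one-step observability), R ≻ 0 and Q ⪰ 0, then the Riccati update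
g(X) = A X Aᵀ + Q − A X Cᵀ (C X Cᵀ + R)⁻¹ C X Aᵀ is uniformly bounded:
there is L > 0 with g(X) ⪯ L·I for every X ⪰ 0. -/
theorem riccati_uniform_bound_one_step_observable {n : ℕ}
    (A C Q R : Matrix (Fin n) (Fin n) ℝ) (hC : IsUnit C)
    (hQ : Q.PosSemidef) (hR : R.PosDef) :
    ∃ L : ℝ, 0 < L ∧ ∀ X : Matrix (Fin n) (Fin n) ℝ, X.PosSemidef →
      ((L • (1 : Matrix (Fin n) (Fin n) ℝ)) -
        (A * X * Aᵀ + Q - A * X * Cᵀ * (C * X * Cᵀ + R)⁻¹ * (C * X * Aᵀ))).PosSemidef := by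
  have hbound : ((A * C⁻¹) * R * (A * C⁻¹)ᵀ + Q).PosSemidef := by
    simpa only [conjTranspose_eq_transpose_of_trivial] using
      (hR.posSemidef.mul_mul_conjTranspose_same (A * C⁻¹)).add hQ
  obtain ⟨L, hL, hbound_le⟩ := hbound.isHermitian.exists_le_smul_one
  exact ⟨L, hL, fun X hX => (riccatiMap_le_of_isUnit hC hR hX).trans hbound_le⟩
end

section
/- Submultiplicativity-based spectral comparison: let H = D (Pᵀ ⊗ M + Qᵀ ⊗ N) where D = diag((A⊗A), …, (A⊗A)^s), P, Q are s×s entrywise-nonnegative matrices, and M, N ∈ ℂ^{n²×n²} arise as M = B̄ ⊗ B, N = Ē ⊗ E for matrices B, E ∈ ℂ^{n×n}. Define the scalar comparison matrix Φ = (‖B‖² P + ‖E‖² Q) diag(‖A‖², ‖A²‖², …, ‖A^s‖²). If ρ(Φ) < 1, then ρ(H) < 1. -/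
open Matrix WithLp Filter Topology
open scoped Kronecker Matrix.Norms.L2Operator

/-!
Let `H v = μ v` with `v ≠ 0`, cut `v` into its `s` blocks `v_j` and put `w_j = ‖v_j‖₂`. The
`(i, j)` block of `H` is `(A ⊗ A)^(i+1) (P_ji B̄ ⊗ B + Q_ji Ē ⊗ E)`, whose operator norm is at
most `Φ_ji` because `‖X ⊗ Y‖ ≤ ‖X‖ ‖Y‖`. Hence `|μ| w ≤ w Φ` entrywise, and iterating,
`|μ|^k w ≤ w Φ^k`. If `|μ|` exceeded `ρ(Φ)`, Gelfand's formula would give `Φ^k / |μ|^k → 0`,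
forcing `w = 0`. So `ρ(H) ≤ ρ(Φ) < 1`.
-/

theorem tendsto_inv_pow_smul_pow_of_spectralRadius_lt {A : Type*} [NormedRing A]
    [NormedAlgebra ℂ A] [CompleteSpace A] {a : A} {c : ℝ}
    (h : spectralRadius ℂ a < ENNReal.ofReal c) :
    Tendsto (fun k : ℕ => ((c : ℂ) ^ k)⁻¹ • a ^ k) atTop (𝓝 0) := by
  obtain ⟨t, ht0, hρt, htc⟩ := ENNReal.lt_iff_exists_real_btwn.1 h
  have htc' : t < c := (ENNReal.ofReal_lt_ofReal_iff_of_nonneg ht0).1 htc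
  have hc : 0 < c := ht0.trans_lt htc'
  have hbound : ∀ᶠ k : ℕ in atTop, ‖((c : ℂ) ^ k)⁻¹ • a ^ k‖ ≤ (t / c) ^ k := by
    filter_upwards [eventually_ge_atTop 1,
      (spectrum.pow_norm_pow_one_div_tendsto_nhds_spectralRadius a).eventually_lt_const hρt]
      with k hk1 hk
    have hk' : ‖a ^ k‖ < t ^ k := by
      rwa [ENNReal.ofReal_lt_ofReal_iff_of_nonneg (by positivity), one_div,
        Real.rpow_inv_lt_iff_of_pos (norm_nonneg _) ht0 (by positivity), Real.rpow_natCast] at hk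
    rw [norm_smul, norm_inv, norm_pow, Complex.norm_real, Real.norm_of_nonneg hc.le, div_pow,
      inv_mul_eq_div]
    gcongr
  exact squeeze_zero_norm' hbound (tendsto_pow_atTop_nhds_zero_of_lt_one (by positivity)
    ((div_lt_one hc).2 htc'))

theorem norm_toLp_star {𝕜 ι : Type*} [RCLike 𝕜] [Fintype ι] (x : ι → 𝕜) :
    ‖toLp 2 (star x)‖ = ‖toLp 2 x‖ := by
  simp [EuclideanSpace.norm_eq]

namespace Matrix

variable {𝕜 : Type*} [RCLike 𝕜] {l m n p ι κ σ τ : Type*}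

lemma l2_opNorm_le_of_mulVec_le [Fintype m] [Fintype n] [DecidableEq n] {A : Matrix m n 𝕜}
    {c : ℝ} (hc : 0 ≤ c) (h : ∀ x : n → 𝕜, ‖toLp 2 (A *ᵥ x)‖ ≤ c * ‖toLp 2 x‖) : ‖A‖ ≤ c := by
  rw [l2_opNorm_def]
  exact ContinuousLinearMap.opNorm_le_bound _ hc fun x => h (ofLp x)

lemma map_star_mulVec [Fintype n] (A : Matrix m n 𝕜) (x : n → 𝕜) :
    A.map star *ᵥ x = star (A *ᵥ star x) := by
  ext i
  simp [mulVec, dotProduct, mul_comm]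

lemma l2_opNorm_map_star_le [Fintype m] [Fintype n] [DecidableEq n] (A : Matrix m n 𝕜) :
    ‖A.map star‖ ≤ ‖A‖ :=
  l2_opNorm_le_of_mulVec_le (norm_nonneg A) fun x => by
    rw [map_star_mulVec, norm_toLp_star, ← norm_toLp_star x]
    exact A.l2_opNorm_mulVec (toLp 2 (star x))

lemma l2_opNorm_transpose_le [Fintype m] [Fintype n] [DecidableEq m] [DecidableEq n]
    (A : Matrix m n 𝕜) : ‖Aᵀ‖ ≤ ‖A‖ := by
  have hA : Aᵀ = (A.map star)ᴴ := by ext; simp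
  rw [hA, l2_opNorm_conjTranspose]
  exact l2_opNorm_map_star_le A

lemma norm_toLp_vec_sq [Fintype m] [Fintype n] (V : Matrix m n 𝕜) :
    ‖toLp 2 (vec V)‖ ^ 2 = ∑ j, ‖toLp 2 (Vᵀ j)‖ ^ 2 := by
  simp [EuclideanSpace.norm_sq_eq, vec, Fintype.sum_prod_type]

lemma norm_toLp_vec_conjTranspose [Fintype m] [Fintype n] (V : Matrix m n 𝕜) :
    ‖toLp 2 (vec Vᴴ)‖ = ‖toLp 2 (vec V)‖ := by
  simp [EuclideanSpace.norm_eq, vec, Fintype.sum_prod_type, Finset.sum_comm (γ := m)]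

lemma norm_toLp_vec_mul_le_l2_opNorm_mul [Fintype l] [Fintype m] [Fintype n] [DecidableEq m]
    (Y : Matrix l m 𝕜) (V : Matrix m n 𝕜) :
    ‖toLp 2 (vec (Y * V))‖ ≤ ‖Y‖ * ‖toLp 2 (vec V)‖ := by
  refine (pow_le_pow_iff_left₀ (norm_nonneg _) (by positivity) two_ne_zero).1 ?_
  rw [mul_pow, norm_toLp_vec_sq, norm_toLp_vec_sq, Finset.mul_sum]
  gcongr with j
  rw [← mul_pow]
  gcongr
  exact Y.l2_opNorm_mulVec (toLp 2 (Vᵀ j))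

lemma norm_toLp_vec_mul_le_mul_l2_opNorm [Fintype m] [Fintype n] [Fintype p] [DecidableEq n]
    [DecidableEq p] (V : Matrix m n 𝕜) (W : Matrix n p 𝕜) :
    ‖toLp 2 (vec (V * W))‖ ≤ ‖toLp 2 (vec V)‖ * ‖W‖ := by
  rw [← norm_toLp_vec_conjTranspose, conjTranspose_mul, ← l2_opNorm_conjTranspose W, mul_comm,
    ← norm_toLp_vec_conjTranspose V]
  exact norm_toLp_vec_mul_le_l2_opNorm_mul _ _

lemma l2_opNorm_kronecker_le [Fintype l] [Fintype m] [Fintype n] [Fintype p] [DecidableEq l]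
    [DecidableEq m] [DecidableEq p] (X : Matrix l m 𝕜) (Y : Matrix n p 𝕜) :
    ‖X ⊗ₖ Y‖ ≤ ‖X‖ * ‖Y‖ := by
  -- `X ⊗ₖ Y` acts on `vec V` as `V ↦ Y V Xᵀ`, and `‖vec V‖₂` is the Frobenius norm of `V`.
  refine l2_opNorm_le_of_mulVec_le (by positivity) fun x => ?_
  obtain ⟨V, rfl⟩ := vec_bijective.2 x
  rw [kronecker_mulVec_vec]
  calc ‖toLp 2 (vec (Y * V * Xᵀ))‖ ≤ ‖Y‖ * ‖toLp 2 (vec V)‖ * ‖Xᵀ‖ := by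
        grw [norm_toLp_vec_mul_le_mul_l2_opNorm, norm_toLp_vec_mul_le_l2_opNorm_mul]
    _ ≤ ‖Y‖ * ‖toLp 2 (vec V)‖ * ‖X‖ := by grw [l2_opNorm_transpose_le]
    _ = ‖X‖ * ‖Y‖ * ‖toLp 2 (vec V)‖ := by ring

lemma kronecker_pow {α : Type*} [CommSemiring α] [Fintype m] [Fintype n] [DecidableEq m]
    [DecidableEq n] (X : Matrix m m α) (Y : Matrix n n α) (k : ℕ) :
    (X ⊗ₖ Y) ^ k = (X ^ k) ⊗ₖ (Y ^ k) := by
  induction k with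
  | zero => simp
  | succ k ih => rw [pow_succ, ih, ← mul_kronecker_mul, pow_succ, pow_succ]

lemma l2_opNorm_conj_kronecker_self_le [Fintype n] [DecidableEq n] (X : Matrix n n 𝕜) :
    ‖X.map (starRingEnd 𝕜) ⊗ₖ X‖ ≤ ‖X‖ ^ 2 :=
  calc ‖X.map (starRingEnd 𝕜) ⊗ₖ X‖ ≤ ‖X.map star‖ * ‖X‖ := l2_opNorm_kronecker_le _ _
    _ ≤ ‖X‖ ^ 2 := by grw [l2_opNorm_map_star_le, sq]

lemma curry_mulVec {α : Type*} [NonUnitalNonAssocSemiring α] [Fintype τ] [Fintype κ]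
    (K : Matrix (σ × ι) (τ × κ) α) (v : τ × κ → α) (i : σ) :
    Function.curry (K *ᵥ v) i = ∑ j, (comp σ τ ι κ α).symm K i j *ᵥ Function.curry v j := by
  ext p
  simp [mulVec, dotProduct, Fintype.sum_prod_type]

lemma norm_toLp_curry_mulVec_le [Fintype τ] [Fintype ι] [Fintype κ] [DecidableEq κ]
    (K : Matrix (σ × ι) (τ × κ) 𝕜) (v : τ × κ → 𝕜) (i : σ) :
    ‖toLp 2 (Function.curry (K *ᵥ v) i)‖ ≤
      ∑ j, ‖(comp σ τ ι κ 𝕜).symm K i j‖ * ‖toLp 2 (Function.curry v j)‖ := by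
  rw [curry_mulVec, toLp_sum]
  refine (norm_sum_le _ _).trans (Finset.sum_le_sum fun j _ => ?_)
  exact l2_opNorm_mulVec _ (toLp 2 (Function.curry v j))

lemma exists_mulVec_eq_smul_of_mem_spectrum {K : Type*} [Field K] [Fintype ι] [DecidableEq ι]
    {A : Matrix ι ι K} {μ : K} (h : μ ∈ spectrum K A) : ∃ v ≠ 0, A *ᵥ v = μ • v := by
  rw [← spectrum_toLin', ← Module.End.hasEigenvalue_iff_mem_spectrum] at h
  obtain ⟨v, hv⟩ := h.exists_hasEigenvector
  exact ⟨v, hv.2, by simpa using hv.apply_eq_smul⟩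

lemma vecMul_mono_of_nonneg [Fintype ι] {Φ : Matrix ι ι ℝ} (hΦ : ∀ i j, 0 ≤ Φ i j) {x y : ι → ℝ}
    (h : x ≤ y) : x ᵥ* Φ ≤ y ᵥ* Φ := fun i =>
  Finset.sum_le_sum fun j _ => mul_le_mul_of_nonneg_right (h j) (hΦ j i)

lemma pow_smul_le_vecMul_pow [Fintype ι] [DecidableEq ι] {Φ : Matrix ι ι ℝ}
    (hΦ : ∀ i j, 0 ≤ Φ i j) {w : ι → ℝ} {r : ℝ} (hr : 0 ≤ r) (h : r • w ≤ w ᵥ* Φ) (k : ℕ) :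
    r ^ k • w ≤ w ᵥ* Φ ^ k := by
  induction k with
  | zero => simp
  | succ k ih =>
    calc r ^ (k + 1) • w = r ^ k • (r • w) := by rw [pow_succ, mul_smul]
      _ ≤ r ^ k • (w ᵥ* Φ) := smul_le_smul_of_nonneg_left h (pow_nonneg hr k)
      _ = (r ^ k • w) ᵥ* Φ := (smul_vecMul _ _ _).symm
      _ ≤ (w ᵥ* Φ ^ k) ᵥ* Φ := vecMul_mono_of_nonneg hΦ ih
      _ = w ᵥ* Φ ^ (k + 1) := by rw [vecMul_vecMul, pow_succ]

theorem ofReal_le_spectralRadius_of_smul_le_vecMul [Fintype ι] [DecidableEq ι]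
    {Φ : Matrix ι ι ℝ} (hΦ : ∀ i j, 0 ≤ Φ i j) {w : ι → ℝ} (hw : 0 ≤ w) (hw0 : w ≠ 0) {r : ℝ}
    (h : r • w ≤ w ᵥ* Φ) : ENNReal.ofReal r ≤ spectralRadius ℂ (Φ.map Complex.ofReal) := by
  by_contra! hlt
  have hr : 0 < r := ENNReal.ofReal_pos.1 (bot_le.trans_lt hlt)
  have hentry : ∀ k j i, (((r : ℂ) ^ k)⁻¹ • Φ.map Complex.ofReal ^ k) j i
      = ((r ^ k)⁻¹ * (Φ ^ k) j i : ℝ) := by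
    intro k j i
    have hpow : Φ.map Complex.ofReal ^ k = (Φ ^ k).map Complex.ofReal :=
      (Matrix.map_pow Φ Complex.ofRealHom k).symm
    rw [hpow]
    simp
  have hlim : ∀ j i, Tendsto (fun k => (r ^ k)⁻¹ * (Φ ^ k) j i) atTop (𝓝 0) := by
    intro j i
    have := ((Complex.continuous_re.comp (continuous_id.matrix_elem j i)).tendsto 0).comp
      (tendsto_inv_pow_smul_pow_of_spectralRadius_lt hlt)
    convert this using 1
    · ext k
      simp only [Function.comp_apply, id_eq]
      rw [hentry, Complex.ofReal_re]
    · simp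
  have hbound : ∀ i k, w i ≤ ∑ j, w j * ((r ^ k)⁻¹ * (Φ ^ k) j i) := by
    intro i k
    have := pow_smul_le_vecMul_pow hΦ hr.le h k i
    simp only [Pi.smul_apply, smul_eq_mul, vecMul, dotProduct] at this
    simp_rw [← mul_assoc, mul_comm _ (r ^ k)⁻¹, mul_assoc, ← Finset.mul_sum]
    rwa [le_inv_mul_iff₀ (by positivity)]
  refine hw0 (funext fun i => le_antisymm ?_ (hw i))
  refine ge_of_tendsto' (x := atTop) ?_ (hbound i)
  simpa using tendsto_finsetSum Finset.univ fun j _ => (hlim j i).const_mul (w j)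

theorem spectralRadius_le_of_norm_comp_symm_le [Fintype σ] [DecidableEq σ] [Fintype ι]
    [DecidableEq ι] (K : Matrix (σ × ι) (σ × ι) ℂ) (Φ : Matrix σ σ ℝ)
    (hK : ∀ i j, ‖(comp σ σ ι ι ℂ).symm K i j‖ ≤ Φ j i) :
    spectralRadius ℂ K ≤ spectralRadius ℂ (Φ.map Complex.ofReal) := by
  refine iSup₂_le fun μ hμ => ?_
  obtain ⟨v, hv0, hv⟩ := exists_mulVec_eq_smul_of_mem_spectrum hμ
  set w : σ → ℝ := fun j => ‖toLp 2 (Function.curry v j)‖ with hw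
  have hw0 : w ≠ 0 := by
    obtain ⟨⟨j, q⟩, hjq⟩ := Function.ne_iff.1 hv0
    refine Function.ne_iff.2 ⟨j, ?_⟩
    simpa [hw, Function.ne_iff] using ⟨q, hjq⟩
  have hsub : ‖μ‖ • w ≤ w ᵥ* Φ := fun i =>
    calc ‖μ‖ * w i = ‖toLp 2 (Function.curry (K *ᵥ v) i)‖ := by
          rw [hv, ← norm_smul, ← toLp_smul]; rfl
      _ ≤ ∑ j, ‖(comp σ σ ι ι ℂ).symm K i j‖ * w j := norm_toLp_curry_mulVec_le K v i
      _ ≤ ∑ j, w j * Φ j i := Finset.sum_le_sum fun j _ => by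
          rw [mul_comm]; gcongr; exact hK i j
  have := ofReal_le_spectralRadius_of_smul_le_vecMul (fun i j => (norm_nonneg _).trans (hK j i))
    (fun j => norm_nonneg _) hw0 hsub
  rwa [ofReal_norm, enorm_eq_nnnorm] at this

end Matrix

/-- Submultiplicativity-based spectral comparison: with
H = diag((A⊗A), …, (A⊗A)^s) (Pᵀ ⊗ (B̄⊗B) + Qᵀ ⊗ (Ē⊗E)) and
Φ = (‖B‖² P + ‖E‖² Q) diag(‖A‖², …, ‖A^s‖²), if ρ(Φ) < 1 then ρ(H) < 1. -/
theorem spectral_comparison {n s : ℕ}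
    (A B E : Matrix (Fin n) (Fin n) ℂ)
    (P Q : Matrix (Fin s) (Fin s) ℝ) (hP : ∀ i j, 0 ≤ P i j) (hQ : ∀ i j, 0 ≤ Q i j)
    (D : Matrix (Fin s × Fin n × Fin n) (Fin s × Fin n × Fin n) ℂ)
    (hD : ∀ p q, D p q = if p.1 = q.1 then ((A ⊗ₖ A) ^ ((p.1 : ℕ) + 1)) p.2 q.2 else 0)
    (H : Matrix (Fin s × Fin n × Fin n) (Fin s × Fin n × Fin n) ℂ)
    (hH : H = D * ((P.map Complex.ofReal)ᵀ ⊗ₖ (B.map (starRingEnd ℂ) ⊗ₖ B)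
        + (Q.map Complex.ofReal)ᵀ ⊗ₖ (E.map (starRingEnd ℂ) ⊗ₖ E)))
    (Φ : Matrix (Fin s) (Fin s) ℝ)
    (hΦ : Φ = (‖B‖ ^ 2 • P + ‖E‖ ^ 2 • Q) *
        Matrix.diagonal (fun i : Fin s => ‖A ^ ((i : ℕ) + 1)‖ ^ 2))
    (hρ : spectralRadius ℂ (Φ.map Complex.ofReal) < 1) :
    spectralRadius ℂ H < 1 := by
  set M := B.map (starRingEnd ℂ) ⊗ₖ B
  set N := E.map (starRingEnd ℂ) ⊗ₖ E
  set G : Fin s → Matrix (Fin n × Fin n) (Fin n × Fin n) ℂ := fun i => (A ⊗ₖ A) ^ ((i : ℕ) + 1)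
  have hblock : ∀ i j,
      (comp _ _ _ _ ℂ).symm H i j = G i * ((P j i : ℂ) • M + (Q j i : ℂ) • N) := by
    have hDblock : (compRingEquiv _ _ ℂ).symm D = diagonal G := by
      ext i j p q
      simp only [compRingEquiv_symm_apply, comp_symm_apply, hD, diagonal_apply, G]
      split_ifs <;> rfl
    intro i j
    rw [← compRingEquiv_symm_apply, hH, map_mul, hDblock, diagonal_mul]
    rfl
  refine lt_of_le_of_lt (spectralRadius_le_of_norm_comp_symm_le H Φ fun i j => ?_) hρ
  have hG : ‖G i‖ ≤ ‖A ^ ((i : ℕ) + 1)‖ ^ 2 := by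
    simp only [G, kronecker_pow]
    grw [l2_opNorm_kronecker_le, sq]
  have hS : ‖(P j i : ℂ) • M + (Q j i : ℂ) • N‖ ≤ ‖B‖ ^ 2 * P j i + ‖E‖ ^ 2 * Q j i := by
    grw [norm_add_le, norm_smul, norm_smul, l2_opNorm_conj_kronecker_self_le,
      l2_opNorm_conj_kronecker_self_le]
    simp [abs_of_nonneg (hP j i), abs_of_nonneg (hQ j i), mul_comm]
  have hΦji : Φ j i = (‖B‖ ^ 2 * P j i + ‖E‖ ^ 2 * Q j i) * ‖A ^ ((i : ℕ) + 1)‖ ^ 2 := by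
    simp [hΦ, mul_diagonal]
  rw [hblock, hΦji, mul_comm]
  grw [l2_opNorm_mul, hG, hS]
end
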